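/- Suppose the graph G contains a vertex x and a set U of at least two other vertices such that the induced subgraph G[U] is not complete and for all u ∈ U we have x ∈ N(u) ⊆ U ∪ {x}. Then the number of maximum independent sets of G equals the number of maximum independent sets of G − x. -/

import Mathlib

attribute [local instance] Classical.propDecidable

/-- `s` is an independent set of vertices of `G`. -/
def IsIndep {V : Type*} (G : SimpleGraph V) (s : Finset V) : Prop :=
  ∀ u ∈ s, ∀ v ∈ s, ¬ G.Adj u v

/-- `s` is a maximum independent set of vertices of `G`. -/
def IsMaxmIndep {V : Type*} (G : SimpleGraph V) (s : Finset V) : Prop :=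
  IsIndep G s ∧ ∀ t : Finset V, IsIndep G t → t.card ≤ s.card

/-- `m'(G)`: the number of maximum independent sets of `G`. -/
noncomputable def numMaxmIndep {V : Type*} [Fintype V] (G : SimpleGraph V) : ℕ :=
  Set.ncard {s : Finset V | IsMaxmIndep G s}

/-!
If `x` lies in some independent set `s`, pick non-adjacent `u, v ∈ U`. Every neighbour of `u`
or `v` other than `x` is a neighbour of `x`, hence outside `s`, so trading `x` for `u` and `v`
gives a larger independent set. Thus no maximum independent set of `G` contains `x`, and the maximum
independent sets of `G` are exactly those of `G - x`.
-/

section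

open Finset

variable {V : Type*} {G : SimpleGraph V}

theorem IsIndep.mono {s t : Finset V} (ht : IsIndep G t) (hst : s ⊆ t) : IsIndep G s :=
  fun a ha b hb => ht a (hst ha) b (hst hb)

theorem isIndep_insert {a : V} {s : Finset V} :
    IsIndep G (insert a s) ↔ IsIndep G s ∧ ∀ b ∈ s, ¬ G.Adj a b := by
  simp only [IsIndep, mem_insert, forall_eq_or_imp, G.irrefl, not_false_eq_true, true_and]
  exact ⟨fun h => ⟨fun b hb c hc => h.2 b hb |>.2 c hc, h.1⟩,
    fun h => ⟨h.2, fun b hb => ⟨fun hba => h.2 b hb hba.symm, h.1 b hb⟩⟩⟩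

theorem isIndep_map_subtype_iff {S : Set V} {t : Finset S} :
    IsIndep G (t.map (Function.Embedding.subtype (· ∈ S))) ↔ IsIndep (G.induce S) t := by
  simp only [IsIndep, mem_map, Function.Embedding.subtype_apply, forall_exists_index, and_imp,
    forall_apply_eq_imp_iff₂, SimpleGraph.comap_adj, SimpleGraph.induce]

theorem exists_isMaxmIndep [Finite V] (G : SimpleGraph V) : ∃ s, IsMaxmIndep G s := by
  have := Fintype.ofFinite V
  obtain ⟨s, hs, hmax⟩ := (univ.filter (IsIndep G)).exists_max_image card
    ⟨∅, mem_filter.2 ⟨mem_univ _, by simp [IsIndep]⟩⟩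
  exact ⟨s, (mem_filter.1 hs).2, fun t ht => hmax t (mem_filter.2 ⟨mem_univ _, ht⟩)⟩

section InducedSubgraph

variable {S : Set V}

theorem isMaxmIndep_map_subtype_iff [Finite V] (hS : ∀ s, IsMaxmIndep G s → ↑s ⊆ S)
    {t : Finset S} :
    IsMaxmIndep G (t.map (Function.Embedding.subtype (· ∈ S))) ↔
      IsMaxmIndep (G.induce S) t := by
  refine ⟨fun ht => ⟨isIndep_map_subtype_iff.1 ht.1, fun t' ht' => ?_⟩,
    fun ht => ⟨isIndep_map_subtype_iff.2 ht.1, fun s hs => ?_⟩⟩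
  · simpa using ht.2 _ (isIndep_map_subtype_iff.2 ht')
  · obtain ⟨m, hm⟩ := exists_isMaxmIndep G
    have hm_map : (m.subtype (· ∈ S)).map (Function.Embedding.subtype _) = m :=
      subtype_map_of_mem fun _ ha => hS m hm ha
    have hm_indep : IsIndep (G.induce S) (m.subtype (· ∈ S)) :=
      isIndep_map_subtype_iff.1 (by rw [hm_map]; exact hm.1)
    calc s.card ≤ m.card := hm.2 s hs
      _ = (m.subtype (· ∈ S)).card := (congrArg card hm_map).symm.trans (card_map _)
      _ ≤ t.card := ht.2 _ hm_indep
      _ = _ := (card_map _).symm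

theorem numMaxmIndep_induce_of_forall_subset [Fintype V] [Fintype S]
    (hS : ∀ s, IsMaxmIndep G s → ↑s ⊆ S) : numMaxmIndep (G.induce S) = numMaxmIndep G := by
  have hset : {s | IsMaxmIndep G s} =
      (·.map (Function.Embedding.subtype (· ∈ S))) '' {t | IsMaxmIndep (G.induce S) t} := by
    ext s
    refine ⟨fun hs => ⟨s.subtype (· ∈ S), ?_, ?_⟩, ?_⟩
    · have hs_map := subtype_map_of_mem fun _ ha => hS s hs ha
      exact (isMaxmIndep_map_subtype_iff hS).1 (by rw [hs_map]; exact hs)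
    · exact subtype_map_of_mem fun _ ha => hS s hs ha
    · rintro ⟨t, ht, rfl⟩
      exact (isMaxmIndep_map_subtype_iff hS).2 ht
  rw [numMaxmIndep, numMaxmIndep, hset, Set.ncard_image_of_injective _ (map_injective _)]

end InducedSubgraph

section Exchange

variable {x u v : V}

theorem IsIndep.not_adj_of_mem_erase {s : Finset V} (hs : IsIndep G s) (hxs : x ∈ s)
    (hu : ∀ w, G.Adj u w → w = x ∨ G.Adj x w) {w : V} (hw : w ∈ s.erase x) :
    ¬ G.Adj u w := by
  intro huw
  obtain ⟨hwx, hws⟩ := mem_erase.1 hw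
  exact (hu w huw).elim hwx (hs x hxs w hws)

theorem IsIndep.exists_card_lt_of_mem {s : Finset V} (hs : IsIndep G s) (hxs : x ∈ s)
    (hxu : G.Adj x u) (hxv : G.Adj x v) (huv : u ≠ v) (hnadj : ¬ G.Adj u v)
    (hu : ∀ w, G.Adj u w → w = x ∨ G.Adj x w)
    (hv : ∀ w, G.Adj v w → w = x ∨ G.Adj x w) :
    ∃ t, IsIndep G t ∧ s.card < t.card := by
  have hus : u ∉ s := fun h => hs x hxs u h hxu
  have hvs : v ∉ s := fun h => hs x hxs v h hxv
  refine ⟨insert u (insert v (s.erase x)), ?_, ?_⟩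
  · refine isIndep_insert.2 ⟨isIndep_insert.2 ⟨hs.mono (erase_subset _ _),
      fun w hw => hs.not_adj_of_mem_erase hxs hv hw⟩, fun w hw => ?_⟩
    rcases mem_insert.1 hw with rfl | hw
    · exact hnadj
    · exact hs.not_adj_of_mem_erase hxs hu hw
  · have hu_new : u ∉ insert v (s.erase x) := by
      simp only [mem_insert, mem_erase, not_or]
      exact ⟨huv, fun h => hus h.2⟩
    rw [card_insert_of_notMem hu_new,
      card_insert_of_notMem fun h => hvs (mem_of_mem_erase h), card_erase_of_mem hxs]
    have := card_pos.2 ⟨x, hxs⟩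
    omega

theorem IsMaxmIndep.notMem_of_nonadj_neighbors {s : Finset V} (hs : IsMaxmIndep G s)
    (hxu : G.Adj x u) (hxv : G.Adj x v) (huv : u ≠ v) (hnadj : ¬ G.Adj u v)
    (hu : ∀ w, G.Adj u w → w = x ∨ G.Adj x w)
    (hv : ∀ w, G.Adj v w → w = x ∨ G.Adj x w) :
    x ∉ s := fun hxs =>
  have ⟨t, ht, hlt⟩ := hs.1.exists_card_lt_of_mem hxs hxu hxv huv hnadj hu hv
  (hs.2 t ht).not_gt hlt

end Exchange

end

theorem stmt6_general {V : Type*} [Fintype V] (G : SimpleGraph V) (x : V) (U : Set V)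
    (hnc : ¬ G.IsClique U)
    (hU : ∀ u ∈ U, G.Adj x u ∧ G.neighborSet u ⊆ U ∪ {x}) :
    numMaxmIndep G = numMaxmIndep (G.induce {y | y ≠ x}) := by
  obtain ⟨u, hu, v, hv, huv, hnadj⟩ : ∃ u ∈ U, ∃ v ∈ U, u ≠ v ∧ ¬ G.Adj u v := by
    simpa [SimpleGraph.isClique_iff, Set.Pairwise] using hnc
  have hN : ∀ a ∈ U, ∀ w, G.Adj a w → w = x ∨ G.Adj x w := fun a ha w haw =>
    ((hU a ha).2 haw).elim (fun hw => .inr (hU w hw).1) .inl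
  refine (numMaxmIndep_induce_of_forall_subset fun s hs y hy => ?_).symm
  rintro rfl
  exact hs.notMem_of_nonadj_neighbors (hU u hu).1 (hU v hv).1 huv hnadj (hN u hu) (hN v hv) hy

/-- Lemma : deleting such a vertex  preserves the number of maximum
independent sets. -/
theorem stmt6 {V : Type*} [Fintype V] (G : SimpleGraph V) (x : V) (U : Set V)
    (hxU : x ∉ U) (hcard : 2 ≤ U.ncard) (hnc : ¬ G.IsClique U)
    (hU : ∀ u ∈ U, G.Adj x u ∧ G.neighborSet u ⊆ U ∪ {x}) :
    numMaxmIndep G = numMaxmIndep (G.induce {y | y ≠ x}) :=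
  stmt6_general G x U hnc hU
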